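/- arXiv:2205.15425 — 2 statements merged into one kernel-verified Lean document; each statement's English description precedes it below -/
import Mathlib

section
/- Every necklace with at least 3 paths (i.e. every necklace that is not a cycle) is of class 1^±: χ'(G, σ) = Δ(G) for every signature σ. -/
open SimpleGraph

namespace Signed

variable {V : Type*}

/-- The color set `M n`. -/
def colorSet (n : ℕ) : Set ℤ :=
  {m : ℤ | 2 * m.natAbs ≤ n ∧ (Even n → m ≠ 0)}

/-- `f` is an `n`-edge-coloring of the signed graph `(G, σ)`. -/
def IsEdgeColoring (G : SimpleGraph V) (σ : Sym2 V → ℤ) (n : ℕ)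
    (f : V → Sym2 V → ℤ) : Prop :=
  (∀ u v, G.Adj u v → f u s(u, v) ∈ colorSet n) ∧
  (∀ u v, G.Adj u v → f u s(u, v) = - σ s(u, v) * f v s(u, v)) ∧
  (∀ u v w, G.Adj u v → G.Adj u w → v ≠ w → f u s(u, v) ≠ f u s(u, w))

/-- `(G, σ)` admits an `n`-edge-coloring. -/
def Colorable (G : SimpleGraph V) (σ : Sym2 V → ℤ) (n : ℕ) : Prop :=
  ∃ f, IsEdgeColoring G σ n f

/-- The signed chromatic index. -/
noncomputable def chromIndex (G : SimpleGraph V) (σ : Sym2 V → ℤ) : ℕ :=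
  sInf {n | Colorable G σ n}

/-- `σ` is a signature on `G`: it takes values `±1` on edges. -/
def IsSignature (G : SimpleGraph V) (σ : Sym2 V → ℤ) : Prop :=
  ∀ e ∈ G.edgeSet, σ e = 1 ∨ σ e = -1

/-- Maximum degree (classical decidability). -/
noncomputable def maxDeg [Fintype V] (G : SimpleGraph V) : ℕ :=
  @SimpleGraph.maxDegree V G _ (Classical.decRel _)

/-- degree of a vertex, instance-free. -/
noncomputable def deg (G : SimpleGraph V) (v : V) : ℕ :=
  (G.neighborSet v).ncard

/-- A signed graph is balanced if every cycle has sign product `1`. -/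
def Balanced (H : SimpleGraph V) (σ : Sym2 V → ℤ) : Prop :=
  ∀ (u : V) (w : H.Walk u u), w.IsCycle → (w.edges.map σ).prod = 1

/-- A set of edges of `G` forming a matching. -/
def IsMatchingSet (G : SimpleGraph V) (M : Set (Sym2 V)) : Prop :=
  M ⊆ G.edgeSet ∧ ∀ e ∈ M, ∀ e' ∈ M, ∀ v : V, v ∈ e → v ∈ e' → e = e'

/-- `H` is a path graph: some path walk carries all of its edges. -/
def IsPathGraph (H : SimpleGraph V) : Prop :=
  ∃ (u v : V) (p : H.Walk u v), p.IsPath ∧ ∀ e, e ∈ H.edgeSet ↔ e ∈ p.edges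

/-- Class `1^±`. -/
def Class1pm [Fintype V] (G : SimpleGraph V) : Prop :=
  ∀ σ : Sym2 V → ℤ, IsSignature G σ → chromIndex G σ = maxDeg G

/-- Class `2^±`. -/
def Class2pm [Fintype V] (G : SimpleGraph V) : Prop :=
  ∀ σ : Sym2 V → ℤ, IsSignature G σ → chromIndex G σ = maxDeg G + 1

end Signed

open Signed SimpleGraph

/-!
At the two branch vertices `u`, `v` all `k` paths meet while every other vertex has degree at
most two, so `Δ = k` and `k` colors are necessary. To color with `M_k`, give the `k` paths distinct
colors `a i` at `u` and distinct colors `b i` at `v`, then color each path separately. Across an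
edge `e` a color is multiplied by `-σ e`; with `|M_k| ≥ 3` every path of length at least three
can be colored for arbitrary end colors, a path of length one forces `b i = ε i * a i` and one of
length two forbids it, where `ε i` is the product of these factors along the path. Only one path
can be a single edge, so Hall's theorem supplies the `b i` once the `a i` give two non-forced
paths different forbidden values.
-/

theorem Finset.exists_mem_ne_ne {α : Type*} [DecidableEq α] {s : Finset α} (hs : 2 < s.card)
    (x y : α) : ∃ c ∈ s, c ≠ x ∧ c ≠ y := by
  obtain ⟨c, hc, hcy⟩ :=
    (s.erase x).exists_mem_ne (by have := s.pred_card_le_card_erase (a := x); omega) y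
  exact ⟨c, Finset.mem_of_mem_erase hc, Finset.ne_of_mem_erase hc, hcy⟩

theorem Int.mul_mul_of_isUnit {u : ℤ} (hu : IsUnit u) (m : ℤ) : u * (u * m) = m := by
  rw [← mul_assoc, Int.isUnit_mul_self hu, one_mul]

theorem SimpleGraph.Walk.mk_mem_edges_of_length_eq_one {V : Type*} {G : SimpleGraph V} {u v : V}
    {p : G.Walk u v} (h : p.length = 1) : s(u, v) ∈ p.edges := by
  rcases p with _ | ⟨_, _ | _⟩ <;> simp_all

theorem SimpleGraph.degree_eq_ncard_neighborSet {V : Type*} (G : SimpleGraph V) [Fintype V]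
    [DecidableRel G.Adj] (v : V) : G.degree v = (G.neighborSet v).ncard := by
  rw [← card_neighborSet_eq_degree, Set.ncard_eq_toFinset_card', Set.toFinset_card]

open Finset in
theorem exists_injective_eq_iff_mem {ι α : Type*} [Fintype ι] [DecidableEq α] {S : Finset α}
    (hcard : Fintype.card ι = #S) {x : ι → α} (hx : ∀ l, x l ∈ S) {F : Set ι}
    (hF : F.Subsingleton) {i j : ι} (hi : i ∉ F) (hj : j ∉ F) (hij : x i ≠ x j) :
    ∃ b : ι → α, Function.Injective b ∧ (∀ l, b l ∈ S) ∧
      ∀ l, b l = x l ↔ l ∈ F := by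
  classical
  set t : ι → Finset α := fun l => if l ∈ F then {x l} else S.erase (x l)
  have hall : ∀ s : Finset ι, #s ≤ #(s.biUnion t) := by
    intro s
    by_cases hsF : ∀ l ∈ s, l ∈ F
    · rcases s.eq_empty_or_nonempty with rfl | ⟨l, hl⟩
      · simp
      have hs1 : #s ≤ 1 := card_le_one.2 fun l hl l' hl' => hF (hsF l hl) (hsF l' hl')
      have hne : (s.biUnion t).Nonempty :=
        ⟨x l, mem_biUnion.2 ⟨l, hl, by simp [t, hsF l hl]⟩⟩
      have := hne.card_pos
      omega
    push Not at hsF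
    obtain ⟨l, hl, hlF⟩ := hsF
    by_cases hs : s = univ
    · subst hs
      rw [card_univ, hcard]
      refine card_le_card fun c hc => ?_
      by_cases hci : c = x i
      · exact mem_biUnion.2 ⟨j, mem_univ _, by simp [t, hj, hc, hci ▸ hij]⟩
      · exact mem_biUnion.2 ⟨i, mem_univ _, by simp [t, hi, hc, hci]⟩
    · have hsub : S.erase (x l) ⊆ s.biUnion t := by
        simpa [t, hlF] using subset_biUnion_of_mem t hl
      have := card_le_card hsub
      have := S.pred_card_le_card_erase (a := x l)
      have := (card_lt_iff_ne_univ s).2 hs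
      omega
  obtain ⟨b, hb, hbt⟩ := (all_card_le_biUnion_card_iff_exists_injective t).1 hall
  refine ⟨b, hb, fun l => ?_, fun l => ⟨fun hbl => ?_, fun hl => ?_⟩⟩
  · by_cases hl : l ∈ F
    · exact (show b l = x l by simpa [t, hl] using hbt l) ▸ hx l
    · exact mem_of_mem_erase (by simpa [t, hl] using hbt l)
  · by_contra hl
    exact ne_of_mem_erase (by simpa [t, hl] using hbt l) hbl
  · simpa [t, hl] using hbt l

open Finset in
theorem exists_injective_pair_eq_iff_mem {ι α : Type*} [Fintype ι] [DecidableEq α]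
    {S : Finset α} (hcard : Fintype.card ι = #S) (hS : 2 < #S) (T : ι → Equiv.Perm α)
    (hT : ∀ i, Set.MapsTo (T i) S S) {F : Set ι} (hF : F.Subsingleton) :
    ∃ a b : ι → α, Function.Injective a ∧ Function.Injective b ∧
      (∀ l, a l ∈ S ∧ b l ∈ S) ∧ ∀ l, b l = T l (a l) ↔ l ∈ F := by
  classical
  obtain ⟨i, hi, j, hj, hij⟩ :
      ∃ i ∈ univ.filter (· ∉ F), ∃ j ∈ univ.filter (· ∉ F), i ≠ j := by
    refine one_lt_card.1 ?_
    have hin : #(univ.filter (· ∈ F)) ≤ 1 :=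
      card_le_one.2 fun l hl l' hl' => hF (mem_filter.1 hl).2 (mem_filter.1 hl').2
    have := card_filter_add_card_filter_not (s := univ) (· ∈ F)
    rw [card_univ] at this
    omega
  rw [mem_filter] at hi hj
  obtain ⟨m₁, hm₁⟩ : S.Nonempty := card_pos.1 (by omega)
  obtain ⟨m₂, hm₂, hm₂₁, hm₂T⟩ := S.exists_mem_ne_ne hS m₁ ((T j).symm (T i m₁))
  obtain ⟨e, he⟩ := Set.MapsTo.exists_equiv_extend_of_card_eq (s := {i, j})
    (f := fun l => if l = i then m₁ else m₂) hcard
    (by rintro l (rfl | rfl) <;> simp [hm₁, hm₂, hij.symm])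
    (by rintro l (rfl | rfl) l' (rfl | rfl) <;> simp [hij, hij.symm, hm₂₁, hm₂₁.symm])
  have hxij : T i (e i) ≠ T j (e j) := by
    rw [he i (by simp), he j (by simp), if_pos rfl, if_neg hij.symm]
    exact fun h => hm₂T (Equiv.eq_symm_apply _ |>.2 h.symm)
  obtain ⟨b, hb, hbS, hbT⟩ :=
    exists_injective_eq_iff_mem hcard (fun l => hT l (e l).2) hF hi.2 hj.2 hxij
  exact ⟨fun l => e l, b, Subtype.val_injective.comp e.injective, hb,
    fun l => ⟨(e l).2, hbS l⟩, hbT⟩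

namespace Signed

variable {V : Type*} {G : SimpleGraph V} {σ : Sym2 V → ℤ}

section ColorSet

variable {n : ℕ} {m : ℤ}

noncomputable def colorFinset (n : ℕ) : Finset ℤ :=
  if Even n then (Finset.Icc (-((n / 2 : ℕ) : ℤ)) (n / 2 : ℕ)).erase 0
  else Finset.Icc (-((n / 2 : ℕ) : ℤ)) (n / 2 : ℕ)

theorem mem_colorFinset : m ∈ colorFinset n ↔ m ∈ colorSet n := by
  unfold colorFinset colorSet
  split_ifs with h <;>
    simp only [h, Finset.mem_erase, Finset.mem_Icc, Set.mem_ofPred_eq, forall_const,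
      IsEmpty.forall_iff, and_true] <;> rw [Nat.even_iff] at h <;> omega

@[simp]
theorem coe_colorFinset : (colorFinset n : Set ℤ) = colorSet n :=
  Set.ext fun _ => mem_colorFinset

theorem card_colorFinset : (colorFinset n).card = n := by
  unfold colorFinset
  split_ifs with h <;> rw [Nat.even_iff] at h
  · rw [Finset.card_erase_of_mem (Finset.mem_Icc.2 (by omega)), Int.card_Icc]
    omega
  · rw [Int.card_Icc]
    omega

theorem isUnit_mul_mem_colorSet {ε : ℤ} (hε : IsUnit ε) (hm : m ∈ colorSet n) :
    ε * m ∈ colorSet n := by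
  obtain ⟨h2, h0⟩ := hm
  refine ⟨by rwa [Int.natAbs_mul, Int.natAbs_of_isUnit hε, one_mul], fun he => ?_⟩
  exact mul_ne_zero hε.ne_zero (h0 he)

end ColorSet

theorem degree_le_of_colorable [Fintype V] [DecidableRel G.Adj] {n : ℕ} (h : Colorable G σ n)
    (v : V) : G.degree v ≤ n := by
  obtain ⟨f, hmem, -, hinj⟩ := h
  rw [← card_colorFinset (n := n), ← card_neighborFinset_eq_degree]
  refine Finset.card_le_card_of_injOn (fun x => f v s(v, x)) (fun x hx => ?_)
    fun x hx y hy hxy => ?_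
  · exact mem_colorFinset.2 (hmem v x ((mem_neighborFinset _ _ _).1 hx))
  · by_contra hne
    exact hinj v x y ((mem_neighborFinset _ _ _).1 hx) ((mem_neighborFinset _ _ _).1 hy) hne hxy

theorem maxDeg_le_of_colorable [Fintype V] {n : ℕ} (h : Colorable G σ n) : maxDeg G ≤ n :=
  let := Classical.decRel G.Adj
  maxDegree_le_of_forall_degree_le G n (degree_le_of_colorable h)

theorem chromIndex_eq_of_colorable [Fintype V] (h : Colorable G σ (maxDeg G)) :
    chromIndex G σ = maxDeg G :=
  le_antisymm (Nat.sInf_le h) (le_csInf ⟨_, h⟩ fun _ => maxDeg_le_of_colorable)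

theorem IsSignature.isUnit (hσ : IsSignature G σ) {e : Sym2 V} (he : e ∈ G.edgeSet) :
    IsUnit (σ e) :=
  Int.isUnit_iff.2 (hσ e he)

/-- The factor by which a color is transported along `w`: an edge `e` multiplies it by `-σ e`. -/
def pathSign (σ : Sym2 V → ℤ) {x y : V} (w : G.Walk x y) : ℤ :=
  (-1) ^ w.length * (w.edges.map σ).prod

@[simp]
theorem pathSign_cons (σ : Sym2 V → ℤ) {x y z : V} (h : G.Adj x y) (w : G.Walk y z) :
    pathSign σ (Walk.cons h w) = -σ s(x, y) * pathSign σ w := by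
  simp only [pathSign, Walk.length_cons, Walk.edges_cons, List.map_cons, List.prod_cons, pow_succ]
  ring

theorem IsSignature.isUnit_pathSign (hσ : IsSignature G σ) {x y : V} (w : G.Walk x y) :
    IsUnit (pathSign σ w) :=
  (isUnit_neg_one.pow _).mul <| List.prod_isUnit fun _ he => by
    obtain ⟨e, he', rfl⟩ := List.mem_map.1 he
    exact hσ.isUnit (w.edges_subset_edgeSet he')

/-- End colors `a` at `x` and `b` at `y` admitting a coloring of the path `w`: only paths of
length one or two constrain them. -/
def AdmissibleEnds (σ : Sym2 V → ℤ) {x y : V} (w : G.Walk x y) (a b : ℤ) : Prop :=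
  (w.length = 1 → b = pathSign σ w * a) ∧ (w.length = 2 → b ≠ pathSign σ w * a)

structure IsWalkColoring (σ : Sym2 V → ℤ) (C : Set ℤ) {x y : V} (w : G.Walk x y)
    (g : V → Sym2 V → ℤ) (a b : ℤ) : Prop where
  mem : ∀ p q, s(p, q) ∈ w.edges → g p s(p, q) ∈ C
  compat : ∀ p q, s(p, q) ∈ w.edges → g p s(p, q) = -σ s(p, q) * g q s(p, q)
  injective : ∀ p q r, s(p, q) ∈ w.edges → s(p, r) ∈ w.edges → q ≠ r →
    g p s(p, q) ≠ g p s(p, r)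
  start : ∀ q, s(x, q) ∈ w.edges → g x s(x, q) = a
  finish : ∀ q, s(y, q) ∈ w.edges → g y s(y, q) = b

theorem isWalkColoring_nil (C : Set ℤ) (x : V) (g : V → Sym2 V → ℤ) (a b : ℤ) :
    IsWalkColoring σ C (Walk.nil : G.Walk x x) g a b :=
  ⟨by simp, by simp, by simp, by simp, by simp⟩

theorem IsWalkColoring.cons [DecidableEq V] {C : Set ℤ} {x y z : V} {w : G.Walk y z}
    {g : V → Sym2 V → ℤ} {c b : ℤ} (hg : IsWalkColoring σ C w g c b) (h : G.Adj x y)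
    (hx : x ∉ w.support) (hσ : IsUnit (σ s(x, y))) {a : ℤ} (ha : a ∈ C)
    (ha' : -σ s(x, y) * a ∈ C)
    (hy : ∀ r, s(y, r) ∈ w.edges → -σ s(x, y) * a ≠ g y s(y, r))
    (hz : y = z → -σ s(x, y) * a = b) :
    IsWalkColoring σ C (Walk.cons h w)
      (fun p e => if e = s(x, y) then (if p = x then a else -σ s(x, y) * a) else g p e) a b := by
  have hxy : x ≠ y := h.ne
  have hx_edge : ∀ q, s(x, q) ∉ w.edges := fun q hq => hx (w.fst_mem_support_of_mem_edges hq)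
  have hold : ∀ e ∈ w.edges, e ≠ s(x, y) := fun e he hex => hx_edge y (hex ▸ he)
  have hxz : x ≠ z := fun hxz => hx (hxz ▸ w.end_mem_support)
  refine ⟨?mem, ?compat, ?injective, ?start, ?finish⟩ <;>
    simp only [Walk.edges_cons, List.mem_cons]
  case mem =>
    rintro p q (hpq | hpq)
    · simp only [hpq, if_true]
      split_ifs
      exacts [ha, ha']
    · simpa only [if_neg (hold _ hpq)] using hg.mem p q hpq
  case compat =>
    rintro p q (hpq | hpq)
    · rcases Sym2.eq_iff.1 hpq with ⟨rfl, rfl⟩ | ⟨rfl, rfl⟩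
      · simp only [if_true, if_neg hxy.symm]
        exact (Int.mul_mul_of_isUnit hσ.neg a).symm
      · simp only [Sym2.eq_swap (a := p), if_true, if_neg hxy.symm]
    · simpa only [if_neg (hold _ hpq)] using hg.compat p q hpq
  case injective =>
    have hp : ∀ p q r, s(p, q) = s(x, y) → s(p, r) ∈ w.edges → p = y := fun p q r hq hr =>
      (Sym2.mem_iff.1 (hq ▸ Sym2.mem_mk_left p q)).resolve_left
        (by rintro rfl; exact hx_edge r hr)
    rintro p q r (hq | hq) (hr | hr) hqr
    · exact absurd (Sym2.congr_right.1 (hq.trans hr.symm)) hqr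
    · obtain rfl := hp p q r hq hr
      simpa only [if_pos hq, if_neg hxy.symm, if_neg (hold _ hr)] using hy r hr
    · obtain rfl := hp p r q hr hq
      simpa only [if_pos hr, if_neg hxy.symm, if_neg (hold _ hq)] using (hy q hq).symm
    · simpa only [if_neg (hold _ hq), if_neg (hold _ hr)] using hg.injective p q r hq hr hqr
  case start =>
    rintro q (hq | hq)
    · simp [hq]
    · exact absurd hq (hx_edge q)
  case finish =>
    rintro q (hq | hq)
    · have hzy : z = y := (Sym2.mem_iff.1 (hq ▸ Sym2.mem_mk_left z q)).resolve_left hxz.symm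
      simpa only [if_pos hq, if_neg hxz.symm] using hz hzy.symm
    · simpa only [if_neg (hold _ hq)] using hg.finish q hq

theorem exists_admissibleEnds_tail (hσ : IsSignature G σ) {S : Finset ℤ} (hS : 2 < S.card)
    (hSunit : ∀ ε, IsUnit ε → ∀ m ∈ S, ε * m ∈ S) {x y z : V} (h : G.Adj x y)
    (w : G.Walk y z) {a b : ℤ} (hb : b ∈ S) (hab : AdmissibleEnds σ (Walk.cons h w) a b) :
    ∃ c ∈ S, -σ s(x, y) * a ≠ c ∧ AdmissibleEnds σ w c b := by
  have hε := hσ.isUnit_pathSign w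
  have hcancel := Int.mul_mul_of_isUnit hε
  by_cases hlen : w.length = 1
  · refine ⟨pathSign σ w * b, hSunit _ hε b hb, fun hc => ?_, fun _ => (hcancel b).symm,
      fun h2 => absurd h2 (by omega)⟩
    refine hab.2 (by simp [hlen]) ?_
    rw [pathSign_cons, ← hcancel b, ← hc]
    ring
  · obtain ⟨c, hc, hca, hcb⟩ := S.exists_mem_ne_ne hS (-σ s(x, y) * a) (pathSign σ w * b)
    exact ⟨c, hc, hca.symm, fun h1 => absurd h1 hlen, fun _ hbc => hcb (by rw [hbc, hcancel])⟩

theorem exists_isWalkColoring (hσ : IsSignature G σ) {S : Finset ℤ} (hS : 2 < S.card)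
    (hSunit : ∀ ε, IsUnit ε → ∀ m ∈ S, ε * m ∈ S) {x y : V} (w : G.Walk x y)
    (hw : w.IsPath) (hnil : ¬ w.Nil) {a b : ℤ} (ha : a ∈ S) (hb : b ∈ S)
    (hab : AdmissibleEnds σ w a b) :
    ∃ g, IsWalkColoring σ S w g a b := by
  classical
  induction w generalizing a with
  | nil => exact absurd Walk.nil_nil hnil
  | @cons x y z h w ih =>
    have hσxy := hσ.isUnit (G.mem_edgeSet.2 h)
    have hx : x ∉ w.support := ((Walk.cons_isPath_iff h w).1 hw).2
    have ha' : -σ s(x, y) * a ∈ S := hSunit _ hσxy.neg a ha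
    cases w with
    | nil =>
      refine ⟨_, (isWalkColoring_nil _ y (fun _ _ => 0) 0 b).cons h hx hσxy ha ha' (by simp)
        fun _ => ?_⟩
      simpa [pathSign] using (hab.1 rfl).symm
    | cons h' w =>
      obtain ⟨c, hc, hca, hcw⟩ := exists_admissibleEnds_tail hσ hS hSunit h _ hb hab
      obtain ⟨g, hg⟩ := ih hw.of_cons Walk.not_nil_cons hc hcw
      refine ⟨_, hg.cons h hx hσxy ha ha' (fun r hr => hg.start r hr ▸ hca) fun hyz => ?_⟩
      subst hyz
      exact absurd (Walk.isPath_iff_nil.1 hw.of_cons) Walk.not_nil_cons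

section Necklace

variable {u v : V} {ι : Type*} {P : ι → G.Walk u v}

structure IsNecklace (G : SimpleGraph V) {u v : V} {ι : Type*} (P : ι → G.Walk u v) : Prop where
  ne : u ≠ v
  isPath : ∀ i, (P i).IsPath
  inter : ∀ i j, i ≠ j → ∀ w ∈ (P i).support, w ∈ (P j).support → w = u ∨ w = v
  disjoint : ∀ i j, i ≠ j → ∀ e ∈ (P i).edges, e ∉ (P j).edges
  cover : ∀ e ∈ G.edgeSet, ∃ i, e ∈ (P i).edges

namespace IsNecklace

theorem reverse (hN : IsNecklace G P) : IsNecklace G fun i => (P i).reverse where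
  ne := hN.ne.symm
  isPath i := (hN.isPath i).reverse
  inter i j hij w hi hj := by
    simp only [Walk.support_reverse, List.mem_reverse] at hi hj
    exact (hN.inter i j hij w hi hj).symm
  disjoint i j hij e hi hj := by
    simp only [Walk.edges_reverse, List.mem_reverse] at hi hj
    exact hN.disjoint i j hij e hi hj
  cover e he := by simpa using hN.cover e he

theorem not_nil (hN : IsNecklace G P) (i : ι) : ¬ (P i).Nil :=
  Walk.not_nil_of_ne hN.ne

theorem subsingleton_length_eq_one (hN : IsNecklace G P) : {i | (P i).length = 1}.Subsingleton :=
  fun i hi j hj => by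
    by_contra hij
    exact hN.disjoint i j hij _ (Walk.mk_mem_edges_of_length_eq_one hi)
      (Walk.mk_mem_edges_of_length_eq_one hj)

theorem degree_start [Fintype V] [DecidableRel G.Adj] [Fintype ι] (hN : IsNecklace G P) :
    G.degree u = Fintype.card ι := by
  have hsnd : G.neighborSet u = Set.range fun i => (P i).snd := by
    ext x
    refine ⟨fun hx => ?_, ?_⟩
    · obtain ⟨i, hi⟩ := hN.cover s(u, x) hx
      exact ⟨i, ((hN.isPath i).snd_of_toSubgraph_adj (Walk.adj_toSubgraph_iff_mem_edges.2 hi))⟩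
    · rintro ⟨i, rfl⟩
      exact (P i).adj_snd (hN.not_nil i)
  have hinj : Function.Injective fun i => (P i).snd := fun i j hij => by
    by_contra hne
    refine hN.disjoint i j hne _ (Walk.mk_start_snd_mem_edges (hN.not_nil i)) ?_
    rw [show (P i).snd = (P j).snd from hij]
    exact Walk.mk_start_snd_mem_edges (hN.not_nil j)
  rw [degree_eq_ncard_neighborSet, hsnd, Set.ncard_range_of_injective hinj,
    Nat.card_eq_fintype_card]

theorem neighborSet_subset_toSubgraph (hN : IsNecklace G P) {p : V} (hpu : p ≠ u) (hpv : p ≠ v) {i : ι}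
    (hi : p ∈ (P i).support) : G.neighborSet p ⊆ (P i).toSubgraph.neighborSet p := by
  intro x hx
  obtain ⟨j, hj⟩ := hN.cover s(p, x) hx
  obtain rfl : j = i := by
    by_contra hji
    rcases hN.inter j i hji p ((P j).fst_mem_support_of_mem_edges hj) hi with h | h
    exacts [hpu h, hpv h]
  exact Walk.adj_toSubgraph_iff_mem_edges.2 hj

theorem degree_le_two [Fintype V] [DecidableRel G.Adj] (hN : IsNecklace G P) {p : V}
    (hpu : p ≠ u) (hpv : p ≠ v) : G.degree p ≤ 2 := by
  rw [degree_eq_ncard_neighborSet]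
  obtain hp | ⟨x, hx⟩ := (G.neighborSet p).eq_empty_or_nonempty
  · simp [hp]
  obtain ⟨i, hi⟩ := hN.cover s(p, x) hx
  have hpi := (P i).fst_mem_support_of_mem_edges hi
  obtain ⟨n, rfl, hn⟩ := Walk.mem_support_iff_exists_getVert.1 hpi
  have hn0 : n ≠ 0 := by rintro rfl; exact hpu (P i).getVert_zero
  have hnl : n < (P i).length :=
    lt_of_le_of_ne hn (by rintro rfl; exact hpv (P i).getVert_length)
  rw [← (hN.isPath i).ncard_neighborSet_toSubgraph_internal_eq_two hn0 hnl]
  exact Set.ncard_le_ncard (hN.neighborSet_subset_toSubgraph hpu hpv hpi)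
    (Walk.finite_neighborSet_toSubgraph _)

theorem maxDeg_eq [Fintype V] [Fintype ι] (hN : IsNecklace G P) (h2 : 2 ≤ Fintype.card ι) :
    maxDeg G = Fintype.card ι := by
  let := Classical.decRel G.Adj
  refine le_antisymm (maxDegree_le_of_forall_degree_le G _ fun p => ?_)
    (hN.degree_start ▸ G.degree_le_maxDegree u)
  by_cases hpu : p = u
  · exact (hpu ▸ hN.degree_start).le
  by_cases hpv : p = v
  · exact (hpv ▸ hN.reverse.degree_start).le
  exact (hN.degree_le_two hpu hpv).trans h2

theorem colorable_of_isWalkColoring (hN : IsNecklace G P) {n : ℕ} {a b : ι → ℤ}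
    (ha : Function.Injective a) (hb : Function.Injective b) {g : ι → V → Sym2 V → ℤ}
    (hg : ∀ i, IsWalkColoring σ (colorSet n) (P i) (g i) (a i) (b i)) : Colorable G σ n := by
  classical
  -- two paths can only share the endpoints, where their colors are the distinct `a i` or `b i`
  have key : ∀ p q r i j, s(p, q) ∈ (P i).edges → s(p, r) ∈ (P j).edges → q ≠ r →
      g i p s(p, q) ≠ g j p s(p, r) := by
    intro p q r i j hi hj hqr
    obtain rfl | hij := eq_or_ne i j
    · exact (hg i).injective p q r hi hj hqr
    rcases hN.inter i j hij p ((P i).fst_mem_support_of_mem_edges hi)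
      ((P j).fst_mem_support_of_mem_edges hj) with rfl | rfl
    · rw [(hg i).start q hi, (hg j).start r hj]
      exact ha.ne hij
    · rw [(hg i).finish q hi, (hg j).finish r hj]
      exact hb.ne hij
  set f : V → Sym2 V → ℤ := fun p e =>
    if h : ∃ i, e ∈ (P i).edges then g h.choose p e else 0
  have hf : ∀ p q, G.Adj p q → ∃ i, s(p, q) ∈ (P i).edges ∧
      ∀ x, f x s(p, q) = g i x s(p, q) := fun p q hpq =>
    let h := hN.cover s(p, q) hpq
    ⟨h.choose, h.choose_spec, fun _ => dif_pos h⟩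
  refine ⟨f, fun p q hpq => ?_, fun p q hpq => ?_, fun p q r hpq hpr hqr => ?_⟩
  · obtain ⟨i, hi, hfi⟩ := hf p q hpq
    exact hfi p ▸ (hg i).mem p q hi
  · obtain ⟨i, hi, hfi⟩ := hf p q hpq
    rw [hfi p, hfi q]
    exact (hg i).compat p q hi
  · obtain ⟨i, hi, hfi⟩ := hf p q hpq
    obtain ⟨j, hj, hfj⟩ := hf p r hpr
    rw [hfi p, hfj p]
    exact key p q r i j hi hj hqr

theorem colorable [Fintype ι] (hN : IsNecklace G P) (hσ : IsSignature G σ)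
    (h3 : 3 ≤ Fintype.card ι) : Colorable G σ (Fintype.card ι) := by
  set S := colorFinset (Fintype.card ι)
  have hS : 2 < S.card := by rw [card_colorFinset]; omega
  have hSunit : ∀ ε, IsUnit ε → ∀ m ∈ S, ε * m ∈ S := fun ε hε m hm =>
    mem_colorFinset.2 (isUnit_mul_mem_colorSet hε (mem_colorFinset.1 hm))
  obtain ⟨a, b, ha, hb, habS, hab⟩ := exists_injective_pair_eq_iff_mem card_colorFinset.symm hS
    (fun i => (hσ.isUnit_pathSign (P i)).unit.mulLeft)
    (fun i m hm => hSunit _ (Units.isUnit _) m hm)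
    hN.subsingleton_length_eq_one
  have hadm : ∀ i, AdmissibleEnds σ (P i) (a i) (b i) := fun i =>
    ⟨fun h1 => by simpa using (hab i).2 h1,
      fun h2 h => by simpa [h2] using (hab i).1 (by simpa)⟩
  choose g hg using fun i =>
    exists_isWalkColoring hσ hS hSunit (P i) (hN.isPath i) (hN.not_nil i) (habS i).1 (habS i).2
      (hadm i)
  exact hN.colorable_of_isWalkColoring ha hb fun i => coe_colorFinset ▸ hg i

end IsNecklace

end Necklace

end Signed

/-- Every necklace with at least `3` paths is of class `1^±`. A necklace decomposes into
internally disjoint paths sharing the same two endpoints. -/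
theorem necklace_class1 {V : Type*} [Fintype V] (G : SimpleGraph V)
    (hneck : ∃ (u v : V) (k : ℕ), 3 ≤ k ∧ u ≠ v ∧
      ∃ P : Fin k → G.Walk u v,
        (∀ i, (P i).IsPath) ∧
        (∀ i j, i ≠ j → ∀ w : V, w ∈ (P i).support → w ∈ (P j).support → w = u ∨ w = v) ∧
        (∀ i j, i ≠ j → ∀ e, e ∈ (P i).edges → e ∉ (P j).edges) ∧
        (∀ e ∈ G.edgeSet, ∃ i, e ∈ (P i).edges)) :
    Class1pm G := by
  obtain ⟨u, v, k, hk, huv, P, hP, hinter, hdisj, hcover⟩ := hneck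
  have hN : IsNecklace G P := ⟨huv, hP, hinter, hdisj, hcover⟩
  have hcard : Fintype.card (Fin k) = k := Fintype.card_fin k
  intro σ hσ
  apply chromIndex_eq_of_colorable
  rw [hN.maxDeg_eq (by omega)]
  exact hN.colorable hσ (by omega)
end

section
/- Let r < t with t = 2s+1 odd. With parts {u_0,…,u_{r−1}}, {v_0,…,v_{t−1}} of K_{r,t}, define paths G_j (0 ≤ j ≤ s−1) with edges {u_i v_{(i+2j) mod t}, u_i v_{(i+2j+1) mod t} : 0 ≤ i ≤ r−1} and the matching M with edges {u_i v_{(i−1) mod t} : 0 ≤ i ≤ r−1}. Then M is a matching edge-disjoint from every G_j, the G_j are pairwise edge-disjoint paths, and together they decompose K_{r,t} into s paths and one matching; hence for r ≠ t, K_{r,t} is of class 1^±. -/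
open SimpleGraph

open Signed SimpleGraph


/-- The vertex `v_{m mod t}` of the `t`-side. -/
def bidx (t : ℕ) (ht : 0 < t) (m : ℕ) : Fin t := ⟨m % t, Nat.mod_lt _ ht⟩

/-- The `j`-th path `G_j` in the decomposition of `K_{r,t}`. -/
def bipPath (r t : ℕ) (ht : 0 < t) (j : ℕ) : SimpleGraph (Fin r ⊕ Fin t) :=
  SimpleGraph.fromEdgeSet
    {e | ∃ i : Fin r,
      e = s(Sum.inl i, Sum.inr (bidx t ht (i.val + 2 * j))) ∨
      e = s(Sum.inl i, Sum.inr (bidx t ht (i.val + 2 * j + 1)))}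

/-- The matching `M` used in the odd case `t = 2s + 1`. -/
def bipMatch (r t : ℕ) (ht : 0 < t) : Set (Sym2 (Fin r ⊕ Fin t)) :=
  {e | ∃ i : Fin r, e = s(Sum.inl i, Sum.inr (bidx t ht (i.val + (t - 1))))}


section Parts
variable {r t s : ℕ}

lemma bidx_eq_iff (ht : 0 < t) {a b : ℕ} : bidx t ht a = bidx t ht b ↔ a ≡ b [MOD t] := by
  simp [bidx, Fin.ext_iff, Nat.ModEq]

lemma edge_pair_eq {i i' : Fin r} {k k' : Fin t} :
    s(Sum.inl i, Sum.inr k) = (s(Sum.inl i', Sum.inr k') : Sym2 (Fin r ⊕ Fin t)) ↔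
      i = i' ∧ k = k' := by
  constructor
  · intro h
    rcases Sym2.eq_iff.mp h with ⟨h1, h2⟩ | ⟨h1, h2⟩
    · exact ⟨Sum.inl.inj h1, Sum.inr.inj h2⟩
    · exact absurd h1 (by simp)
  · rintro ⟨rfl, rfl⟩; rfl

lemma mod_cancel (ht : 0 < t) {i a b : ℕ} (h : (i + a) % t = (i + b) % t)
    (ha : a < t) (hb : b < t) : a = b := by
  have h2 : a % t = b % t := Nat.ModEq.add_left_cancel' i h
  rwa [Nat.mod_eq_of_lt ha, Nat.mod_eq_of_lt hb] at h2

lemma edge_mode (ht : 0 < t) {i i' : Fin r} {a b : ℕ}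
    (h : s(Sum.inl i, Sum.inr (bidx t ht (i.val + a))) =
         (s(Sum.inl i', Sum.inr (bidx t ht (i'.val + b))) : Sym2 (Fin r ⊕ Fin t)))
    (ha : a < t) (hb : b < t) :
    i = i' ∧ a = b := by
  obtain ⟨h1, h2⟩ := edge_pair_eq.mp h
  subst h1
  exact ⟨rfl, mod_cancel ht ((bidx_eq_iff ht).mp h2) ha hb⟩

lemma mem_bipPath_edgeSet (ht : 0 < t) (j : ℕ) {e : Sym2 (Fin r ⊕ Fin t)} :
    e ∈ (bipPath r t ht j).edgeSet ↔ ∃ i : Fin r,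
      e = s(Sum.inl i, Sum.inr (bidx t ht (i.val + 2 * j))) ∨
      e = s(Sum.inl i, Sum.inr (bidx t ht (i.val + 2 * j + 1))) := by
  rw [bipPath, edgeSet_fromEdgeSet]
  constructor
  · exact fun h => h.1
  · intro h
    refine ⟨h, ?_⟩
    rcases h with ⟨i, h | h⟩ <;> subst h <;> simp

lemma bidx_add_mod (ht : 0 < t) (i x : ℕ) :
    bidx t ht (i + x % t) = bidx t ht (i + x) := by
  simp [bidx, Fin.ext_iff, Nat.add_mod, Nat.mod_mod_of_dvd _ dvd_rfl]

lemma exists_mode (ht : 0 < t) (i : Fin r) (hi : i.val < t) (k : Fin t) :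
    ∃ m < t, k = bidx t ht (i.val + m) := by
  refine ⟨(k.val + t - i.val) % t, Nat.mod_lt _ ht, ?_⟩
  rw [bidx_add_mod]
  have e1 : i.val + (k.val + t - i.val) = k.val + t := by omega
  rw [e1]
  simp [bidx, Fin.ext_iff, Nat.add_mod_right, Nat.mod_eq_of_lt k.isLt]

lemma mem_complete_iff {e : Sym2 (Fin r ⊕ Fin t)} :
    e ∈ (completeBipartiteGraph (Fin r) (Fin t)).edgeSet ↔
      ∃ (i : Fin r) (k : Fin t), e = s(Sum.inl i, Sum.inr k) := by
  induction e with
  | _ u v =>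
    constructor
    · intro h
      rw [SimpleGraph.mem_edgeSet] at h
      rcases u with i | k <;> rcases v with i' | k' <;> simp at h
      · exact ⟨i, k', rfl⟩
      · exact ⟨i', k, Sym2.eq_swap⟩
    · rintro ⟨i, k, h⟩
      rw [h, SimpleGraph.mem_edgeSet]
      simp

lemma matching_part (hr : 0 < r) (hrt : r < t) (ht : 0 < t) :
    IsMatchingSet (completeBipartiteGraph (Fin r) (Fin t)) (bipMatch r t ht) := by
  constructor
  · rintro e ⟨i, rfl⟩
    rw [SimpleGraph.mem_edgeSet]
    simp
  · rintro e ⟨i, rfl⟩ e' ⟨i', rfl⟩ v hv hv'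
    rcases Sym2.mem_iff.mp hv with rfl | rfl <;>
      rcases Sym2.mem_iff.mp hv' with h | h
    · rw [Sum.inl.inj h]
    · exact absurd h (by simp)
    · exact absurd h (by simp)
    · have h2 : (i.val + (t-1)) % t = (i'.val + (t-1)) % t := by
        have := Sum.inr.inj h
        simpa [bidx, Fin.ext_iff] using this
      have h3 : i.val % t = i'.val % t := Nat.ModEq.add_right_cancel' _ h2
      rw [Nat.mod_eq_of_lt (by omega), Nat.mod_eq_of_lt (by omega)] at h3
      rw [Fin.ext h3]

lemma le_part (ht : 0 < t) (j : ℕ) :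
    bipPath r t ht j ≤ completeBipartiteGraph (Fin r) (Fin t) := by
  intro u v h
  rcases (SimpleGraph.fromEdgeSet_adj _).mp h with ⟨⟨i, hc | hc⟩, hne⟩ <;>
    rcases Sym2.eq_iff.mp hc with ⟨rfl, rfl⟩ | ⟨rfl, rfl⟩ <;> simp

lemma disj_match_path (hrt : r < t) (hts : t = 2 * s + 1) (ht : 0 < t) {j : ℕ} (hj : j < s) :
    Disjoint (bipMatch r t ht) ((bipPath r t ht j).edgeSet) := by
  rw [Set.disjoint_left]
  rintro e ⟨i, rfl⟩ hmem
  rcases (mem_bipPath_edgeSet ht j).mp hmem with ⟨i', h | h⟩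
  · obtain ⟨-, h2⟩ := edge_mode (a := t - 1) (b := 2 * j) ht h (by omega) (by omega)
    omega
  · obtain ⟨-, h2⟩ := edge_mode (a := t - 1) (b := 2 * j + 1) ht h (by omega) (by omega)
    omega

lemma disj_path_path (hts : t = 2 * s + 1) (ht : 0 < t) {j j' : ℕ}
    (hj : j < s) (hj' : j' < s) (hjj : j ≠ j') :
    Disjoint ((bipPath r t ht j).edgeSet) ((bipPath r t ht j').edgeSet) := by
  rw [Set.disjoint_left]
  intro e h1 h2
  rcases (mem_bipPath_edgeSet ht j).mp h1 with ⟨i, h | h⟩ <;>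
    rcases (mem_bipPath_edgeSet ht j').mp h2 with ⟨i', h' | h'⟩ <;> rw [h] at h'
  · obtain ⟨-, hab⟩ := edge_mode (a := 2 * j) (b := 2 * j') ht h' (by omega) (by omega)
    omega
  · obtain ⟨-, hab⟩ := edge_mode (a := 2 * j) (b := 2 * j' + 1) ht h' (by omega) (by omega)
    omega
  · obtain ⟨-, hab⟩ := edge_mode (a := 2 * j + 1) (b := 2 * j') ht h' (by omega) (by omega)
    omega
  · obtain ⟨-, hab⟩ := edge_mode (a := 2 * j + 1) (b := 2 * j' + 1) ht h' (by omega) (by omega)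
    omega

lemma union_part (hrt : r < t) (hts : t = 2 * s + 1) (ht : 0 < t) :
    (bipMatch r t ht ∪ ⋃ j : Fin s, (bipPath r t ht j.val).edgeSet)
      = (completeBipartiteGraph (Fin r) (Fin t)).edgeSet := by
  ext e
  constructor
  · rintro (⟨i, rfl⟩ | h)
    · rw [SimpleGraph.mem_edgeSet]; simp
    · obtain ⟨j, hj⟩ := Set.mem_iUnion.mp h
      rcases (mem_bipPath_edgeSet ht j.val).mp hj with ⟨i, h | h⟩ <;>
        exact mem_complete_iff.mpr ⟨i, _, h⟩
  · intro h
    obtain ⟨i, k, rfl⟩ := mem_complete_iff.mp h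
    obtain ⟨m, hm, rfl⟩ := exists_mode ht i (by omega) k
    by_cases hm1 : m = t - 1
    · exact Or.inl ⟨i, by rw [hm1]⟩
    · have hjm : m / 2 < s := by omega
      refine Or.inr (Set.mem_iUnion.mpr ⟨⟨m / 2, hjm⟩, ?_⟩)
      refine (mem_bipPath_edgeSet ht _).mpr ⟨i, ?_⟩
      have hv : ((⟨m / 2, hjm⟩ : Fin s) : ℕ) = m / 2 := rfl
      rw [hv]
      have : m = 2 * (m / 2) ∨ m = 2 * (m / 2) + 1 := by omega
      rcases this with h' | h'
      · left
        have e2 : i.val + 2 * (m / 2) = i.val + m := by omega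
        rw [e2]
      · right
        have e2 : i.val + 2 * (m / 2) + 1 = i.val + m := by omega
        rw [e2]

lemma path_part (hr : 0 < r) (hrt : r < t) (ht : 0 < t) {j : ℕ} (hj2 : 2 * j + 1 < t) :
    IsPathGraph (bipPath r t ht j) := by
  suffices h : ∀ i, i ≤ r → ∃ w : (bipPath r t ht j).Walk
      (Sum.inr (bidx t ht (i + 2 * j))) (Sum.inr (bidx t ht (2 * j))),
      w.IsPath ∧
      (∀ v, v ∈ w.support ↔ (∃ a, a ≤ i ∧ v = Sum.inr (bidx t ht (a + 2 * j))) ∨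
        ∃ a : Fin r, a.val < i ∧ v = Sum.inl a) ∧
      (∀ e, e ∈ w.edges ↔ ∃ a : Fin r, a.val < i ∧
        (e = s(Sum.inl a, Sum.inr (bidx t ht (a.val + 2 * j))) ∨
         e = s(Sum.inl a, Sum.inr (bidx t ht (a.val + 2 * j + 1))))) by
    obtain ⟨w, hp, -, he⟩ := h r le_rfl
    refine ⟨_, _, w, hp, fun e => ?_⟩
    rw [mem_bipPath_edgeSet, he]
    constructor
    · rintro ⟨a, h⟩; exact ⟨a, a.isLt, h⟩
    · rintro ⟨a, -, h⟩; exact ⟨a, h⟩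
  intro i
  induction i with
  | zero =>
    intro _
    refine ⟨Walk.nil.copy (by rw [Nat.zero_add]) rfl, ?_, ?_, ?_⟩
    · rw [Walk.isPath_copy]; exact Walk.IsPath.nil
    · intro v
      rw [Walk.support_copy]
      simp only [Walk.support_nil, List.mem_singleton]
      constructor
      · rintro rfl; exact Or.inl ⟨0, le_rfl, by rw [Nat.zero_add]⟩
      · rintro (⟨a, ha, rfl⟩ | ⟨a, ha, rfl⟩)
        · obtain rfl : a = 0 := by omega
          rw [Nat.zero_add]
        · omega
    · intro e
      rw [Walk.edges_copy]
      simp only [Walk.edges_nil, List.not_mem_nil, false_iff]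
      rintro ⟨a, ha, -⟩; omega
  | succ i IH =>
    intro hi1
    have hi : i < r := hi1
    obtain ⟨w, hp, hsup, hedg⟩ := IH (le_of_lt hi)
    set ii : Fin r := ⟨i, hi⟩ with hii
    have hb1 : bidx t ht (i + 1 + 2 * j) = bidx t ht (i + 2 * j + 1) :=
      congrArg _ (by omega)
    have adj2 : (bipPath r t ht j).Adj (Sum.inl ii) (Sum.inr (bidx t ht (i + 2 * j))) := by
      rw [bipPath, SimpleGraph.fromEdgeSet_adj]
      exact ⟨⟨ii, Or.inl rfl⟩, by simp⟩
    have adj1 : (bipPath r t ht j).Adj (Sum.inr (bidx t ht (i + 1 + 2 * j))) (Sum.inl ii) := by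
      rw [bipPath, SimpleGraph.fromEdgeSet_adj]
      refine ⟨⟨ii, Or.inr ?_⟩, by simp⟩
      rw [Sym2.eq_swap, hb1]
    have hBedge : (s(Sum.inr (bidx t ht (i + 1 + 2 * j)), Sum.inl ii) : Sym2 _) =
        s(Sum.inl ii, Sum.inr (bidx t ht (ii.val + 2 * j + 1))) := by
      rw [Sym2.eq_swap, hb1]
    refine ⟨Walk.cons adj1 (Walk.cons adj2 w), ?_, ?_, ?_⟩
    · rw [Walk.cons_isPath_iff, Walk.cons_isPath_iff]
      refine ⟨⟨hp, ?_⟩, ?_⟩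
      · intro hmem
        rcases (hsup _).mp hmem with ⟨a, ha, heq⟩ | ⟨a, ha, heq⟩
        · exact absurd heq (by simp)
        · have : ii = a := Sum.inl.inj heq
          rw [← this] at ha
          exact absurd ha (by simp [hii])
      · rw [Walk.support_cons]
        intro hmem
        rcases List.mem_cons.mp hmem with heq | hmem'
        · exact absurd heq (by simp)
        · rcases (hsup _).mp hmem' with ⟨a, ha, heq⟩ | ⟨a, ha, heq⟩
          · have h2 : (i + 1 + 2 * j) % t = (a + 2 * j) % t := by
              have := Sum.inr.inj heq
              simpa [bidx, Fin.ext_iff] using this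
            have h3 : (i + 1) % t = a % t := Nat.ModEq.add_right_cancel' _ h2
            rw [Nat.mod_eq_of_lt (by omega), Nat.mod_eq_of_lt (by omega)] at h3
            omega
          · exact absurd heq (by simp)
    · intro v
      rw [Walk.support_cons, Walk.support_cons]
      simp only [List.mem_cons]
      constructor
      · rintro (rfl | rfl | hv)
        · exact Or.inl ⟨i + 1, le_rfl, rfl⟩
        · exact Or.inr ⟨ii, by simp [hii], rfl⟩
        · rcases (hsup v).mp hv with ⟨a, ha, hv'⟩ | ⟨a, ha, hv'⟩
          · exact Or.inl ⟨a, by omega, hv'⟩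
          · exact Or.inr ⟨a, by omega, hv'⟩
      · rintro (⟨a, ha, rfl⟩ | ⟨a, ha, rfl⟩)
        · by_cases hai : a = i + 1
          · subst hai; exact Or.inl rfl
          · exact Or.inr (Or.inr ((hsup _).mpr (Or.inl ⟨a, by omega, rfl⟩)))
        · by_cases hai : a.val = i
          · have : a = ii := Fin.ext (by simp [hii, hai])
            subst this; exact Or.inr (Or.inl rfl)
          · exact Or.inr (Or.inr ((hsup _).mpr (Or.inr ⟨a, by omega, rfl⟩)))
    · intro e
      rw [Walk.edges_cons, Walk.edges_cons]
      simp only [List.mem_cons]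
      constructor
      · rintro (rfl | rfl | he)
        · exact ⟨ii, by simp [hii], Or.inr hBedge⟩
        · exact ⟨ii, by simp [hii], Or.inl rfl⟩
        · obtain ⟨a, ha, h⟩ := (hedg e).mp he
          exact ⟨a, by omega, h⟩
      · rintro ⟨a, ha, rfl | rfl⟩
        · by_cases hai : a.val = i
          · have : a = ii := Fin.ext (by simp [hii, hai])
            subst this; exact Or.inr (Or.inl rfl)
          · exact Or.inr (Or.inr ((hedg _).mpr ⟨a, by omega, Or.inl rfl⟩))
        · by_cases hai : a.val = i
          · have : a = ii := Fin.ext (by simp [hii, hai])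
            subst this; exact Or.inl hBedge.symm
          · exact Or.inr (Or.inr ((hedg _).mpr ⟨a, by omega, Or.inr rfl⟩))

end Parts

/-- The vertex `u_{m mod r}` of the `r`-side. -/
def uidx (r : ℕ) (hr : 0 < r) (m : ℕ) : Fin r := ⟨m % r, Nat.mod_lt _ hr⟩

/-- Sign of the edge `u_i v_{i+2j}`. -/
def sigA (r t : ℕ) (hr : 0 < r) (ht : 0 < t) (σ : Sym2 (Fin r ⊕ Fin t) → ℤ) (j i : ℕ) : ℤ :=
  σ s(Sum.inl (uidx r hr i), Sum.inr (bidx t ht (i + 2 * j)))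

/-- Sign of the edge `u_i v_{i+2j+1}`. -/
def sigB (r t : ℕ) (hr : 0 < r) (ht : 0 < t) (σ : Sym2 (Fin r ⊕ Fin t) → ℤ) (j i : ℕ) : ℤ :=
  σ s(Sum.inl (uidx r hr i), Sum.inr (bidx t ht (i + 2 * j + 1)))

/-- The base color of the `i`-th left vertex on path `G_j`. -/
def Bcol (r t : ℕ) (hr : 0 < r) (ht : 0 < t) (σ : Sym2 (Fin r ⊕ Fin t) → ℤ) (j : ℕ) :
    ℕ → ℤ
  | 0 => (j : ℤ) + 1
  | i + 1 => sigA r t hr ht σ j (i + 1) * sigB r t hr ht σ j i * Bcol r t hr ht σ j i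

/-- Color at left vertex `u_i` of the edge in mode `m`. -/
def hcol (r t : ℕ) (hr : 0 < r) (ht : 0 < t) (σ : Sym2 (Fin r ⊕ Fin t) → ℤ) (i m : ℕ) : ℤ :=
  if m = t - 1 then 0
  else if m % 2 = 0 then Bcol r t hr ht σ (m / 2) i else -(Bcol r t hr ht σ (m / 2) i)

/-- The mode of the edge `u_i v_k`. -/
def mval (t i k : ℕ) : ℕ := (k + t - i) % t

/-- The edge coloring of `K_{r,t}`. -/
noncomputable def fcol (r t : ℕ) (hr : 0 < r) (ht : 0 < t) (σ : Sym2 (Fin r ⊕ Fin t) → ℤ)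
    (x : Fin r ⊕ Fin t) (e : Sym2 (Fin r ⊕ Fin t)) : ℤ :=
  if h : ∃ p : Fin r × Fin t, e = s(Sum.inl p.1, Sum.inr p.2) then
    match x with
    | Sum.inl _ => hcol r t hr ht σ h.choose.1.val (mval t h.choose.1.val h.choose.2.val)
    | Sum.inr _ => -σ e * hcol r t hr ht σ h.choose.1.val (mval t h.choose.1.val h.choose.2.val)
  else 0

section Color
variable {r t s : ℕ}

lemma fcol_inl (hr : 0 < r) (ht : 0 < t) (σ : Sym2 (Fin r ⊕ Fin t) → ℤ)
    (x : Fin r) (i : Fin r) (k : Fin t) :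
    fcol r t hr ht σ (Sum.inl x) s(Sum.inl i, Sum.inr k) =
      hcol r t hr ht σ i.val (mval t i.val k.val) := by
  have hex : ∃ p : Fin r × Fin t,
      (s(Sum.inl i, Sum.inr k) : Sym2 (Fin r ⊕ Fin t)) = s(Sum.inl p.1, Sum.inr p.2) :=
    ⟨(i, k), rfl⟩
  rw [fcol, dif_pos hex]
  obtain ⟨h1, h2⟩ := edge_pair_eq.mp hex.choose_spec
  rw [← h1, ← h2]

lemma fcol_inr (hr : 0 < r) (ht : 0 < t) (σ : Sym2 (Fin r ⊕ Fin t) → ℤ)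
    (x : Fin t) (i : Fin r) (k : Fin t) :
    fcol r t hr ht σ (Sum.inr x) s(Sum.inl i, Sum.inr k) =
      -σ s(Sum.inl i, Sum.inr k) * hcol r t hr ht σ i.val (mval t i.val k.val) := by
  have hex : ∃ p : Fin r × Fin t,
      (s(Sum.inl i, Sum.inr k) : Sym2 (Fin r ⊕ Fin t)) = s(Sum.inl p.1, Sum.inr p.2) :=
    ⟨(i, k), rfl⟩
  rw [fcol, dif_pos hex]
  obtain ⟨h1, h2⟩ := edge_pair_eq.mp hex.choose_spec
  rw [← h1, ← h2]

variable {σ : Sym2 (Fin r ⊕ Fin t) → ℤ}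
  (hsg : ∀ (i : Fin r) (k : Fin t),
    σ s(Sum.inl i, Sum.inr k) = 1 ∨ σ s(Sum.inl i, Sum.inr k) = -1)

include hsg in
lemma Bcol_natAbs (hr : 0 < r) (ht : 0 < t) (j : ℕ) :
    ∀ i : ℕ, (Bcol r t hr ht σ j i).natAbs = j + 1 := by
  intro i
  induction i with
  | zero =>
    rw [show Bcol r t hr ht σ j 0 = ((j : ℤ) + 1) from rfl]
    omega
  | succ i IH =>
    have h1 : (sigA r t hr ht σ j (i + 1)).natAbs = 1 := by
      rcases hsg (uidx r hr (i + 1)) (bidx t ht (i + 1 + 2 * j)) with h | h <;>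
        simp [sigA, h]
    have h2 : (sigB r t hr ht σ j i).natAbs = 1 := by
      rcases hsg (uidx r hr i) (bidx t ht (i + 2 * j + 1)) with h | h <;>
        simp [sigB, h]
    rw [show Bcol r t hr ht σ j (i + 1) =
      sigA r t hr ht σ j (i + 1) * sigB r t hr ht σ j i * Bcol r t hr ht σ j i from rfl]
    rw [Int.natAbs_mul, Int.natAbs_mul, h1, h2, IH]
    ring

include hsg in
lemma hcol_natAbs (hr : 0 < r) (ht : 0 < t) (i m : ℕ) :
    (hcol r t hr ht σ i m).natAbs = if m = t - 1 then 0 else m / 2 + 1 := by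
  rw [hcol]
  split_ifs with h1 h2
  · rfl
  · rw [Bcol_natAbs hsg hr ht]
  · rw [Int.natAbs_neg, Bcol_natAbs hsg hr ht]

lemma mval_lt (ht : 0 < t) (i k : ℕ) : mval t i k < t := Nat.mod_lt _ ht

lemma mode_spec (ht : 0 < t) (i : Fin r) (hi : i.val < t) (k : Fin t) :
    k = bidx t ht (i.val + mval t i.val k.val) := by
  rw [mval, bidx_add_mod]
  have e1 : i.val + (k.val + t - i.val) = k.val + t := by omega
  rw [e1]
  simp [bidx, Fin.ext_iff, Nat.add_mod_right, Nat.mod_eq_of_lt k.isLt]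

lemma mode_unique (ht : 0 < t) (i : Fin r) (hi : i.val < t) (k : Fin t) {x : ℕ} (hx : x < t)
    (hk : k = bidx t ht (i.val + x)) : x = mval t i.val k.val :=
  mod_cancel ht ((bidx_eq_iff ht).mp (hk.symm.trans (mode_spec ht i hi k))) hx
    (mval_lt ht _ _)

lemma mval_inj_right (ht : 0 < t) {i i' : Fin r} (hi : i.val < t) (hi' : i'.val < t) (k : Fin t)
    (h : mval t i.val k.val = mval t i'.val k.val) : i = i' := by
  have h1 := mode_spec ht i hi k
  have h2 := mode_spec ht i' hi' k
  rw [h] at h1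
  have h3 := (bidx_eq_iff ht).mp (h1.symm.trans h2)
  have h4 : i.val % t = i'.val % t := Nat.ModEq.add_right_cancel' _ h3
  rw [Nat.mod_eq_of_lt hi, Nat.mod_eq_of_lt hi'] at h4
  exact Fin.ext h4

include hsg in
lemma hcol_ne (hr : 0 < r) (ht : 0 < t) (hts : t = 2 * s + 1) {i m m' : ℕ} (hm : m < t) (hm' : m' < t)
    (hne : m ≠ m') : hcol r t hr ht σ i m ≠ hcol r t hr ht σ i m' := by
  intro heq
  have ha := congrArg Int.natAbs heq
  rw [hcol_natAbs hsg hr ht, hcol_natAbs hsg hr ht] at ha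
  by_cases h1 : m = t - 1 <;> by_cases h2 : m' = t - 1
  · omega
  · rw [if_pos h1, if_neg h2] at ha; omega
  · rw [if_neg h1, if_pos h2] at ha; omega
  · rw [if_neg h1, if_neg h2] at ha
    have hdiv : m / 2 = m' / 2 := by omega
    have hpar : m % 2 ≠ m' % 2 := by omega
    rw [hcol, hcol, if_neg h1, if_neg h2, hdiv] at heq
    have hB := Bcol_natAbs hsg hr ht (m' / 2) i
    rcases Nat.even_or_odd m with he | ho
    · rw [if_pos (by omega), if_neg (by rw [Nat.even_iff] at he; omega)] at heq
      have : Bcol r t hr ht σ (m' / 2) i = 0 := by omega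
      rw [this] at hB
      simp at hB
    · rw [if_neg (by rw [Nat.odd_iff] at ho; omega),
        if_pos (by rw [Nat.odd_iff] at ho; omega)] at heq
      have : Bcol r t hr ht σ (m' / 2) i = 0 := by omega
      rw [this] at hB
      simp at hB

lemma mem_colorSet_of (hts : t = 2 * s + 1) {v : ℤ} (hv : v.natAbs ≤ s) :
    v ∈ colorSet t := by
  constructor
  · omega
  · intro hev
    rw [Nat.even_iff] at hev
    omega

include hsg in
lemma right_ne (hr : 0 < r) (ht : 0 < t) (hrt : r < t) (hts : t = 2 * s + 1) {i i' : Fin r} (k : Fin t) {j : ℕ}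
    (h1 : mval t i.val k.val = 2 * j) (h2 : mval t i'.val k.val = 2 * j + 1)
    (hjt : 2 * j + 1 < t) :
    -σ s(Sum.inl i, Sum.inr k) * hcol r t hr ht σ i.val (mval t i.val k.val) ≠
    -σ s(Sum.inl i', Sum.inr k) * hcol r t hr ht σ i'.val (mval t i'.val k.val) := by
  have hkA : k = bidx t ht (i.val + 2 * j) := by
    have := mode_spec ht i (by omega) k
    rwa [h1] at this
  have hkB : k = bidx t ht (i'.val + 2 * j + 1) := by
    have h3 := mode_spec ht i' (by omega) k
    rw [h2] at h3
    rw [h3]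
    exact congrArg _ (by omega)
  have hstep : i.val = i'.val + 1 := by
    have h3 := (bidx_eq_iff ht).mp (hkA.symm.trans hkB)
    have h4 : (i.val + 2 * j) % t = ((i'.val + 1) + 2 * j) % t := by
      rw [show (i'.val + 1) + 2 * j = i'.val + 2 * j + 1 by omega]
      exact h3
    have h5 : i.val % t = (i'.val + 1) % t := Nat.ModEq.add_right_cancel' _ h4
    rw [Nat.mod_eq_of_lt (by omega), Nat.mod_eq_of_lt (by omega)] at h5
    exact h5
  have hA : σ s(Sum.inl i, Sum.inr k) = sigA r t hr ht σ j i.val := by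
    rw [sigA, show uidx r hr i.val = i from Fin.ext (Nat.mod_eq_of_lt i.isLt), ← hkA]
  have hB : σ s(Sum.inl i', Sum.inr k) = sigB r t hr ht σ j i'.val := by
    rw [sigB, show uidx r hr i'.val = i' from Fin.ext (Nat.mod_eq_of_lt i'.isLt), ← hkB]
  have hvA : hcol r t hr ht σ i.val (2 * j) = Bcol r t hr ht σ j i.val := by
    rw [hcol, if_neg (by omega), if_pos (by omega),
      show 2 * j / 2 = j from by omega]
  have hvB : hcol r t hr ht σ i'.val (2 * j + 1) = -(Bcol r t hr ht σ j i'.val) := by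
    rw [hcol, if_neg (by omega), if_neg (by omega),
      show (2 * j + 1) / 2 = j from by omega]
  rw [h1, h2, hvA, hvB, hA, hB, hstep]
  rw [show Bcol r t hr ht σ j (i'.val + 1) =
    sigA r t hr ht σ j (i'.val + 1) * sigB r t hr ht σ j i'.val * Bcol r t hr ht σ j i'.val
    from rfl]
  have hB0 : Bcol r t hr ht σ j i'.val ≠ 0 := by
    intro h0
    have := Bcol_natAbs hsg hr ht j i'.val
    rw [h0] at this
    simp at this
  have ha1 : sigA r t hr ht σ j (i'.val + 1) = 1 ∨ sigA r t hr ht σ j (i'.val + 1) = -1 :=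
    hsg _ _
  have hb1 : sigB r t hr ht σ j i'.val = 1 ∨ sigB r t hr ht σ j i'.val = -1 := hsg _ _
  rcases ha1 with h3 | h3 <;> rcases hb1 with h4 | h4 <;> rw [h3, h4] <;> intro heq <;>
    ring_nf at heq <;> omega

lemma maxdeg_eq (hr : 0 < r) (hrt : r < t) :
    maxDeg (completeBipartiteGraph (Fin r) (Fin t)) = t := by
  have key : ∀ inst : DecidableRel (completeBipartiteGraph (Fin r) (Fin t)).Adj,
      @SimpleGraph.maxDegree _ (completeBipartiteGraph (Fin r) (Fin t)) _ inst = t := by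
    intro inst
    letI := inst
    have hdegl : ∀ i : Fin r,
        (completeBipartiteGraph (Fin r) (Fin t)).degree (Sum.inl i) = t := by
      intro i
      rw [SimpleGraph.degree, SimpleGraph.neighborFinset_eq_filter]
      have : (Finset.univ.filter
          ((completeBipartiteGraph (Fin r) (Fin t)).Adj (Sum.inl i))) =
          Finset.univ.image Sum.inr := by
        ext w
        cases w <;> simp
      rw [this, Finset.card_image_of_injective _ Sum.inr_injective]
      simp
    have hdegr : ∀ k : Fin t,
        (completeBipartiteGraph (Fin r) (Fin t)).degree (Sum.inr k) = r := by
      intro k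
      rw [SimpleGraph.degree, SimpleGraph.neighborFinset_eq_filter]
      have : (Finset.univ.filter
          ((completeBipartiteGraph (Fin r) (Fin t)).Adj (Sum.inr k))) =
          Finset.univ.image Sum.inl := by
        ext w
        cases w <;> simp
      rw [this, Finset.card_image_of_injective _ Sum.inl_injective]
      simp
    apply le_antisymm
    · apply SimpleGraph.maxDegree_le_of_forall_degree_le
      intro v
      rcases v with i | k
      · rw [hdegl]
      · rw [hdegr]; omega
    · have h := SimpleGraph.degree_le_maxDegree
        (completeBipartiteGraph (Fin r) (Fin t)) (Sum.inl (⟨0, hr⟩ : Fin r))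
      rwa [hdegl] at h
  exact key _

lemma lower_bound (hr : 0 < r) {σ : Sym2 (Fin r ⊕ Fin t) → ℤ} {n : ℕ}
    (hc : Colorable (completeBipartiteGraph (Fin r) (Fin t)) σ n) : t ≤ n := by
  obtain ⟨f, hmem, -, hinj⟩ := hc
  set u : Fin r ⊕ Fin t := Sum.inl ⟨0, hr⟩ with hu
  set T : Finset ℤ := Finset.filter
    (fun m => 2 * m.natAbs ≤ n ∧ (Even n → m ≠ 0)) (Finset.Icc (-(n : ℤ)) n) with hT
  have hTcard : T.card ≤ n := by
    rcases Nat.even_or_odd n with he | ho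
    · have hsub : T ⊆ (Finset.Icc (-(n / 2 : ℕ) : ℤ) ((n / 2 : ℕ) : ℤ)).erase 0 := by
        intro m hm
        rw [hT, Finset.mem_filter] at hm
        obtain ⟨-, hb, hz⟩ := hm
        rw [Finset.mem_erase, Finset.mem_Icc]
        refine ⟨hz he, ?_, ?_⟩ <;> omega
      calc T.card ≤ _ := Finset.card_le_card hsub
        _ ≤ n := by
          rw [Finset.card_erase_of_mem (by rw [Finset.mem_Icc]; constructor <;> omega),
            Int.card_Icc]
          rw [Nat.even_iff] at he
          omega
    · have hsub : T ⊆ Finset.Icc (-(n / 2 : ℕ) : ℤ) ((n / 2 : ℕ) : ℤ) := by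
        intro m hm
        rw [hT, Finset.mem_filter] at hm
        obtain ⟨-, hb, -⟩ := hm
        rw [Finset.mem_Icc]
        constructor <;> omega
      calc T.card ≤ _ := Finset.card_le_card hsub
        _ ≤ n := by
          rw [Int.card_Icc]
          rw [Nat.odd_iff] at ho
          omega
  have hadj : ∀ k : Fin t, (completeBipartiteGraph (Fin r) (Fin t)).Adj u (Sum.inr k) := by
    intro k
    rw [hu]
    simp
  have hmap : ∀ k ∈ (Finset.univ : Finset (Fin t)), f u s(u, Sum.inr k) ∈ T := by
    intro k _hk
    have h0 := hmem u (Sum.inr k) (hadj k)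
    obtain ⟨hb, hz⟩ := h0
    rw [hT, Finset.mem_filter, Finset.mem_Icc]
    refine ⟨⟨?_, ?_⟩, hb, hz⟩ <;> omega
  have hinj' : Set.InjOn (fun k : Fin t => f u s(u, Sum.inr k))
      ↑(Finset.univ : Finset (Fin t)) := by
    intro k _ k' _ h
    by_contra hne
    exact hinj u (Sum.inr k) (Sum.inr k') (hadj k) (hadj k')
      (fun hc' => hne (Sum.inr.inj hc')) h
  calc t = (Finset.univ : Finset (Fin t)).card := by simp
    _ ≤ T.card := Finset.card_le_card_of_injOn _ hmap hinj'
    _ ≤ n := hTcard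

end Color

section Parts2
variable {r t s : ℕ}

lemma class_part (hr : 0 < r) (hrt : r < t) (hts : t = 2 * s + 1) (ht : 0 < t) :
    Class1pm (completeBipartiteGraph (Fin r) (Fin t)) := by
  intro σ hsig
  have hs : ∀ (i : Fin r) (k : Fin t),
      σ s(Sum.inl i, Sum.inr k) = 1 ∨ σ s(Sum.inl i, Sum.inr k) = -1 := by
    intro i k
    exact hsig _ (by rw [SimpleGraph.mem_edgeSet]; simp)
  have hup : Colorable (completeBipartiteGraph (Fin r) (Fin t)) σ t := by
    refine ⟨fcol r t hr ht σ, ?_, ?_, ?_⟩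
    · -- colors in colorSet t
      intro u v huv
      rcases u with i | k <;> rcases v with i' | k' <;> simp at huv
      · rw [fcol_inl]
        apply mem_colorSet_of hts
        rw [hcol_natAbs hs hr ht]
        have := mval_lt (t := t) ht i.val k'.val
        split_ifs with h
        · omega
        · omega
      · rw [show (s(Sum.inr k, Sum.inl i') : Sym2 (Fin r ⊕ Fin t)) =
          s(Sum.inl i', Sum.inr k) from Sym2.eq_swap]
        rw [fcol_inr]
        apply mem_colorSet_of hts
        rw [Int.natAbs_mul, Int.natAbs_neg]
        have h2 : (σ s(Sum.inl i', Sum.inr k)).natAbs = 1 := by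
          rcases hs i' k with h | h <;> rw [h] <;> rfl
        rw [h2, one_mul, hcol_natAbs hs hr ht]
        have := mval_lt (t := t) ht i'.val k.val
        split_ifs with h
        · omega
        · omega
    · -- sign condition
      intro u v huv
      rcases u with i | k <;> rcases v with i' | k' <;> simp at huv
      · rw [fcol_inl, fcol_inr]
        rcases hs i k' with h | h <;> rw [h] <;> ring
      · rw [show (s(Sum.inr k, Sum.inl i') : Sym2 (Fin r ⊕ Fin t)) =
          s(Sum.inl i', Sum.inr k) from Sym2.eq_swap]
        rw [fcol_inr, fcol_inl]
    · -- proper at each vertex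
      intro u v w huv huw hvw
      rcases u with i | k
      · rcases v with i' | k' <;> simp at huv
        rcases w with i'' | k'' <;> simp at huw
        have hkk : k' ≠ k'' := fun h => hvw (by rw [h])
        rw [fcol_inl, fcol_inl]
        apply hcol_ne hs hr ht hts (mval_lt ht _ _) (mval_lt ht _ _)
        intro hm
        apply hkk
        have e1 := mode_spec ht i (by omega) k'
        have e2 := mode_spec ht i (by omega) k''
        rw [hm] at e1
        exact e1.trans e2.symm
      · rcases v with i' | k' <;> simp at huv
        rcases w with i'' | k'' <;> simp at huw
        have hii : i' ≠ i'' := fun h => hvw (by rw [h])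
        rw [show (s(Sum.inr k, Sum.inl i') : Sym2 (Fin r ⊕ Fin t)) =
          s(Sum.inl i', Sum.inr k) from Sym2.eq_swap]
        rw [show (s(Sum.inr k, Sum.inl i'') : Sym2 (Fin r ⊕ Fin t)) =
          s(Sum.inl i'', Sum.inr k) from Sym2.eq_swap]
        rw [fcol_inr, fcol_inr]
        set m1 := mval t i'.val k.val with hm1
        set m2 := mval t i''.val k.val with hm2
        have hmlt1 : m1 < t := mval_lt ht _ _
        have hmlt2 : m2 < t := mval_lt ht _ _
        have hmm : m1 ≠ m2 := by
          intro h
          exact hii (mval_inj_right ht (by omega) (by omega) k h)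
        intro heq
        have ha := congrArg Int.natAbs heq
        have hs1 : (σ s(Sum.inl i', Sum.inr k)).natAbs = 1 := by
          rcases hs i' k with h | h <;> rw [h] <;> rfl
        have hs2 : (σ s(Sum.inl i'', Sum.inr k)).natAbs = 1 := by
          rcases hs i'' k with h | h <;> rw [h] <;> rfl
        rw [Int.natAbs_mul, Int.natAbs_mul, Int.natAbs_neg, Int.natAbs_neg, hs1, hs2,
          one_mul, one_mul, hcol_natAbs hs hr ht, hcol_natAbs hs hr ht] at ha
        by_cases h1 : m1 = t - 1 <;> by_cases h2 : m2 = t - 1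
        · omega
        · rw [if_pos h1, if_neg h2] at ha; omega
        · rw [if_neg h1, if_pos h2] at ha; omega
        · rw [if_neg h1, if_neg h2] at ha
          have hdiv : m1 / 2 = m2 / 2 := by omega
          have hpar : m1 % 2 ≠ m2 % 2 := by omega
          set j := m1 / 2 with hj
          rcases Nat.even_or_odd m1 with he | ho
          · have hm1e : m1 = 2 * j := by rw [Nat.even_iff] at he; omega
            have hm2e : m2 = 2 * j + 1 := by rw [Nat.even_iff] at he; omega
            exact right_ne hs hr ht hrt hts k hm1e hm2e (by omega) heq
          · have hm1e : m1 = 2 * j + 1 := by rw [Nat.odd_iff] at ho; omega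
            have hm2e : m2 = 2 * (m2 / 2) := by rw [Nat.odd_iff] at ho; omega
            exact right_ne hs hr ht hrt hts k (i := i'') (i' := i') hm2e
              (by rw [hdiv] at hm1e; exact hm1e) (by omega) heq.symm
  have hlow : ∀ n ∈ {n | Colorable (completeBipartiteGraph (Fin r) (Fin t)) σ n}, t ≤ n :=
    fun n hn => lower_bound hr hn
  rw [maxdeg_eq hr hrt, chromIndex]
  exact le_antisymm (Nat.sInf_le hup) (le_csInf ⟨t, hup⟩ hlow)

end Parts2

/-- For `r < t = 2s+1`, the `G_j` are pairwise edge-disjoint paths, `M` is a matching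
edge-disjoint from all of them, and together they decompose `K_{r,t}` into `s` paths and a
matching; hence `K_{r,t}` with `r ≠ t` is of class `1^±`. -/
theorem bipartite_odd_class1 (r t s : ℕ) (hr : 0 < r) (hrt : r < t) (hts : t = 2 * s + 1) :
    IsMatchingSet (completeBipartiteGraph (Fin r) (Fin t)) (bipMatch r t (by omega)) ∧
    (∀ j : Fin s, IsPathGraph (bipPath r t (by omega) j.val)) ∧
    (∀ j : Fin s, bipPath r t (by omega) j.val ≤ completeBipartiteGraph (Fin r) (Fin t)) ∧
    (∀ j : Fin s, Disjoint (bipMatch r t (by omega))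
      ((bipPath r t (by omega) j.val).edgeSet)) ∧
    (∀ j j' : Fin s, j ≠ j' →
      Disjoint ((bipPath r t (by omega) j.val).edgeSet)
        ((bipPath r t (by omega) j'.val).edgeSet)) ∧
    (bipMatch r t (by omega) ∪ ⋃ j : Fin s, (bipPath r t (by omega) j.val).edgeSet)
      = (completeBipartiteGraph (Fin r) (Fin t)).edgeSet ∧
    Class1pm (completeBipartiteGraph (Fin r) (Fin t)) := by
  have ht : 0 < t := by omega
  exact ⟨matching_part hr hrt ht,
    fun j => path_part hr hrt ht (by have := j.isLt; omega),
    fun j => le_part ht j.val,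
    fun j => disj_match_path hrt hts ht j.isLt,
    fun j j' hjj => disj_path_path hts ht j.isLt j'.isLt
      (fun h => hjj (Fin.ext h)),
    union_part hrt hts ht,
    class_part hr hrt hts ht⟩
end
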